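/- Let p(x) = Σ_{n∈I₁} αₙ N(x; μₙ, Pₙ) and q(x) = Σ_{m∈I₂} βₘ N(x; mₘ, Sₘ) be two finite Gaussian mixtures on ℝ^d with symmetric positive-definite covariances. Fix an index n ∈ I₁ and regard J(αₙ) = ISD(p‖q) as a function of the single weight αₙ, all other weights α_{n'} (n' ≠ n) and βₘ held fixed. Then J is differentiable at every αₙ ∈ ℝ with derivative J'(αₙ) = 2 Σ_{n'∈I₁, n'≠n} α_{n'} N(μₙ; μ_{n'}, Pₙ + P_{n'}) + 2 αₙ N(μₙ; μₙ, 2Pₙ) − 2 Σ_{m∈I₂} βₘ N(μₙ; mₘ, Pₙ + Sₘ). -/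

import Mathlib

open MeasureTheory Real Matrix Finset

/-- The multivariate Gaussian density
`N(x; μ, Σ) = ((2π)^d det Σ)^{-1/2} exp(-(1/2)(x-μ)ᵀ Σ⁻¹ (x-μ))` on `ℝ^d`. -/
noncomputable def gaussPDF (d : ℕ) (μ : Fin d → ℝ) (S : Matrix (Fin d) (Fin d) ℝ)
    (x : Fin d → ℝ) : ℝ :=
  (Real.sqrt ((2 * Real.pi) ^ d * S.det))⁻¹ *
    Real.exp (-(1 / 2) * ((x - μ) ⬝ᵥ (S⁻¹ *ᵥ (x - μ))))

/-! The integrand is the square of `t * N(·; μₙ, Pₙ) + g`, where `g` collects the other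
components of `p - q`, so `J` is a quadratic polynomial in `t` whose coefficients are L² inner
products of Gaussian densities. These are all computed by completing the square,
`N(x; μ₁, P₁) N(x; μ₂, P₂) = N(μ₁; μ₂, P₁ + P₂) N(x; c, (P₁⁻¹ + P₂⁻¹)⁻¹)` for an explicit
centre `c`, hence `∫ N(·; μ₁, P₁) N(·; μ₂, P₂) = N(μ₁; μ₂, P₁ + P₂)`. -/

theorem hasDerivAt_integral_mul_add_sq {α : Type*} [MeasurableSpace α] {μ : Measure α}
    {f g : α → ℝ} (hf : MemLp f 2 μ) (hg : MemLp g 2 μ) (a : ℝ) :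
    HasDerivAt (fun t => ∫ x, (t * f x + g x) ^ 2 ∂μ)
      (2 * (a * ∫ x, f x ^ 2 ∂μ + ∫ x, f x * g x ∂μ)) a := by
  have hfg : Integrable (fun x => f x * g x) μ := hf.integrable_mul hg
  have hquadratic : (fun t => ∫ x, (t * f x + g x) ^ 2 ∂μ) = fun t =>
      (∫ x, f x ^ 2 ∂μ) * t ^ 2 + (2 * ∫ x, f x * g x ∂μ) * t + ∫ x, g x ^ 2 ∂μ := by
    ext t
    have hexpand : (fun x => (t * f x + g x) ^ 2) =
        fun x => t ^ 2 * f x ^ 2 + 2 * t * (f x * g x) + g x ^ 2 := by ext; ring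
    rw [hexpand, integral_add _ hg.integrable_sq, integral_add, integral_const_mul,
      integral_const_mul]
    · ring
    exacts [hf.integrable_sq.const_mul _, hfg.const_mul _,
      (hf.integrable_sq.const_mul _).add (hfg.const_mul _)]
  rw [hquadratic]
  have hpoly := ((((hasDerivAt_id' a).pow 2).const_mul (∫ x, f x ^ 2 ∂μ)).add
    ((hasDerivAt_id' a).const_mul (2 * ∫ x, f x * g x ∂μ))).add_const (∫ x, g x ^ 2 ∂μ)
  exact hpoly.congr_deriv (by ring)

theorem Matrix.PosDef.isSymm {ι : Type*} {M : Matrix ι ι ℝ} (hM : M.PosDef) : M.IsSymm :=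
  isHermitian_iff_isSymm.mp hM.isHermitian

section QuadraticForms

variable {ι : Type*} [Fintype ι]

theorem Matrix.IsSymm.dotProduct_mulVec_comm {M : Matrix ι ι ℝ} (hM : M.IsSymm) (u v : ι → ℝ) :
    u ⬝ᵥ M *ᵥ v = v ⬝ᵥ M *ᵥ u := by
  rw [dotProduct_mulVec, ← mulVec_transpose, hM.eq, dotProduct_comm]

theorem Matrix.IsSymm.add_dotProduct_mulVec_add {M : Matrix ι ι ℝ} (hM : M.IsSymm) (u v : ι → ℝ) :
    (u + v) ⬝ᵥ M *ᵥ (u + v) = u ⬝ᵥ M *ᵥ u + 2 * (u ⬝ᵥ M *ᵥ v) + v ⬝ᵥ M *ᵥ v := by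
  rw [mulVec_add, dotProduct_add, add_dotProduct, add_dotProduct, hM.dotProduct_mulVec_comm v u]
  ring

theorem integral_exp_neg_half_dotProduct_self :
    ∫ y : ι → ℝ, exp (-(1 / 2) * (y ⬝ᵥ y)) = √((2 * π) ^ Fintype.card ι) := by
  calc ∫ y : ι → ℝ, exp (-(1 / 2) * (y ⬝ᵥ y))
      = ∫ y : ι → ℝ, ∏ i, exp (-(1 / 2) * y i ^ 2) := by
        simp only [← Real.exp_sum, dotProduct, Finset.mul_sum, sq]
    _ = ∏ _i : ι, √(2 * π) := by
        rw [volume_pi, integral_fintype_prod_eq_prod (fun _ t => exp (-(1 / 2) * t ^ 2))]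
        simp only [integral_gaussian, div_div_eq_mul_div, div_one, mul_comm π]
    _ = √((2 * π) ^ Fintype.card ι) := by
        rw [← Real.sqrt_prod _ fun _ _ => by positivity, Finset.prod_const, Finset.card_univ]

variable [DecidableEq ι]

theorem integral_comp_mulVec {B : Matrix ι ι ℝ} (hB : B.det ≠ 0) (f : (ι → ℝ) → ℝ) :
    ∫ x, f (B *ᵥ x) = |B.det|⁻¹ * ∫ y, f y := by
  let e := B.toLinearEquiv' (B.invertibleOfIsUnitDet hB.isUnit)
  have hdet : LinearMap.det (e : (ι → ℝ) →ₗ[ℝ] ι → ℝ) = B.det := LinearMap.det_toLin' B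
  have hmap : Measure.map e volume = ENNReal.ofReal |B.det⁻¹| • volume := by
    have := Measure.map_linearMap_addHaar_eq_smul_addHaar volume (hdet ▸ hB)
    rwa [hdet] at this
  calc ∫ x, f (B *ᵥ x) = ∫ y, f y ∂(Measure.map e volume) :=
        (e.toContinuousLinearEquiv.toHomeomorph.measurableEmbedding.integral_map f).symm
    _ = |B.det|⁻¹ * ∫ y, f y := by
        rw [hmap, integral_smul_measure, ENNReal.toReal_ofReal (abs_nonneg _), abs_inv,
          smul_eq_mul]

open scoped MatrixOrder in
theorem Matrix.PosDef.exists_dotProduct_mulVec_eq {A : Matrix ι ι ℝ} (hA : A.PosDef) :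
    ∃ B : Matrix ι ι ℝ, B.det ^ 2 = A.det ∧ ∀ x, x ⬝ᵥ A *ᵥ x = (B *ᵥ x) ⬝ᵥ (B *ᵥ x) := by
  obtain ⟨B, rfl⟩ := CStarAlgebra.nonneg_iff_eq_star_mul_self.mp hA.posSemidef.nonneg
  refine ⟨B, by rw [det_mul, star_eq_conjTranspose, det_conjTranspose]; simp [sq], fun x => ?_⟩
  rw [← mulVec_mulVec, dotProduct_mulVec, star_eq_conjTranspose,
    conjTranspose_eq_transpose_of_trivial, vecMul_transpose]

theorem integral_exp_neg_half_dotProduct_mulVec {A : Matrix ι ι ℝ} (hA : A.PosDef)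
    (c : ι → ℝ) :
    ∫ x, exp (-(1 / 2) * ((x - c) ⬝ᵥ A *ᵥ (x - c))) = √((2 * π) ^ Fintype.card ι / A.det) := by
  obtain ⟨B, hBA, hquad⟩ := hA.exists_dotProduct_mulVec_eq
  have hB : B.det ≠ 0 := fun h => hA.det_pos.ne' (by rw [← hBA, h, sq, zero_mul])
  rw [integral_sub_right_eq_self (fun x => exp (-(1 / 2) * (x ⬝ᵥ A *ᵥ x))) c]
  simp only [hquad]
  rw [integral_comp_mulVec hB (fun y => exp (-(1 / 2) * (y ⬝ᵥ y))),
    integral_exp_neg_half_dotProduct_self, ← hBA, Real.sqrt_div' _ (sq_nonneg _),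
    Real.sqrt_sq_eq_abs, div_eq_inv_mul]

theorem quadForm_inv_add_quadForm_inv {P₁ P₂ : Matrix ι ι ℝ} (h₁ : P₁.PosDef) (h₂ : P₂.PosDef)
    (μ₁ μ₂ x : ι → ℝ) :
    (x - μ₁) ⬝ᵥ P₁⁻¹ *ᵥ (x - μ₁) + (x - μ₂) ⬝ᵥ P₂⁻¹ *ᵥ (x - μ₂) =
      (μ₁ - μ₂) ⬝ᵥ (P₁ + P₂)⁻¹ *ᵥ (μ₁ - μ₂) +
      (x - (μ₁ - (P₁⁻¹ + P₂⁻¹)⁻¹ *ᵥ P₂⁻¹ *ᵥ (μ₁ - μ₂))) ⬝ᵥ (P₁⁻¹ + P₂⁻¹) *ᵥ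
        (x - (μ₁ - (P₁⁻¹ + P₂⁻¹)⁻¹ *ᵥ P₂⁻¹ *ᵥ (μ₁ - μ₂))) := by
  have hM : (P₁⁻¹ + P₂⁻¹).PosDef := h₁.inv.add h₂.inv
  have woodbury : (P₁ + P₂)⁻¹ = P₂⁻¹ - P₂⁻¹ * (P₁⁻¹ + P₂⁻¹)⁻¹ * P₂⁻¹ := by
    simpa [add_comm P₂] using add_mul_mul_inv_eq_sub (A := P₂) (U := 1) (C := P₁) (V := 1)
      h₂.isUnit h₁.isUnit (by simpa using hM.isUnit)
  have hMM : (P₁⁻¹ + P₂⁻¹) *ᵥ (P₁⁻¹ + P₂⁻¹)⁻¹ *ᵥ P₂⁻¹ *ᵥ (μ₁ - μ₂) = P₂⁻¹ *ᵥ (μ₁ - μ₂) := by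
    rw [mulVec_mulVec, mul_nonsing_inv _ hM.det_pos.ne'.isUnit, one_mulVec]
  rw [show x - μ₂ = (x - μ₁) + (μ₁ - μ₂) by abel,
    show x - (μ₁ - (P₁⁻¹ + P₂⁻¹)⁻¹ *ᵥ P₂⁻¹ *ᵥ (μ₁ - μ₂)) =
      (x - μ₁) + (P₁⁻¹ + P₂⁻¹)⁻¹ *ᵥ P₂⁻¹ *ᵥ (μ₁ - μ₂) by abel,
    h₂.inv.isSymm.add_dotProduct_mulVec_add, hM.isSymm.add_dotProduct_mulVec_add, hMM, woodbury,
    sub_mulVec, dotProduct_sub, add_mulVec, dotProduct_add,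
    ← mulVec_mulVec, ← mulVec_mulVec,
    h₂.inv.isSymm.dotProduct_mulVec_comm (μ₁ - μ₂) ((P₁⁻¹ + P₂⁻¹)⁻¹ *ᵥ _)]
  ring

end QuadraticForms

section GaussPDF

variable {d : ℕ}

theorem integral_gaussPDF {S : Matrix (Fin d) (Fin d) ℝ} (hS : S.PosDef) (μ : Fin d → ℝ) :
    ∫ x, gaussPDF d μ S x = 1 := by
  have hc : 0 < (2 * π) ^ d * S.det := by have := hS.det_pos; positivity
  simp only [gaussPDF]
  rw [integral_const_mul, integral_exp_neg_half_dotProduct_mulVec hS.inv, Fintype.card_fin,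
    det_nonsing_inv, Ring.inverse_eq_inv, div_inv_eq_mul, inv_mul_cancel₀ (sqrt_pos.mpr hc).ne']

theorem integrable_gaussPDF {S : Matrix (Fin d) (Fin d) ℝ} (hS : S.PosDef) (μ : Fin d → ℝ) :
    Integrable (gaussPDF d μ S) :=
  Integrable.of_integral_ne_zero (by rw [integral_gaussPDF hS]; exact one_ne_zero)

variable {P₁ P₂ : Matrix (Fin d) (Fin d) ℝ} (h₁ : P₁.PosDef) (h₂ : P₂.PosDef) (μ₁ μ₂ : Fin d → ℝ)
include h₁ h₂

theorem det_add_mul_det_inv_add_inv :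
    (P₁ + P₂).det * ((P₁⁻¹ + P₂⁻¹)⁻¹).det = P₁.det * P₂.det := by
  rw [Matrix.inv_add_inv (by simp [h₁.isUnit, h₂.isUnit]), Matrix.mul_inv_rev, Matrix.mul_inv_rev,
    nonsing_inv_nonsing_inv _ h₁.det_pos.ne'.isUnit,
    nonsing_inv_nonsing_inv _ h₂.det_pos.ne'.isUnit,
    det_mul, det_mul, det_nonsing_inv, Ring.inverse_eq_inv]
  field_simp [(h₁.add h₂).det_pos.ne']

theorem gaussPDF_mul_gaussPDF (x : Fin d → ℝ) :
    gaussPDF d μ₁ P₁ x * gaussPDF d μ₂ P₂ x = gaussPDF d μ₂ (P₁ + P₂) μ₁ *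
      gaussPDF d (μ₁ - (P₁⁻¹ + P₂⁻¹)⁻¹ *ᵥ P₂⁻¹ *ᵥ (μ₁ - μ₂)) (P₁⁻¹ + P₂⁻¹)⁻¹ x := by
  have hM := h₁.inv.add h₂.inv
  have hconst : (√((2 * π) ^ d * P₁.det))⁻¹ * (√((2 * π) ^ d * P₂.det))⁻¹ =
      (√((2 * π) ^ d * (P₁ + P₂).det))⁻¹ * (√((2 * π) ^ d * ((P₁⁻¹ + P₂⁻¹)⁻¹).det))⁻¹ := by
    rw [← mul_inv, ← mul_inv, ← sqrt_mul (by have := h₁.det_pos; positivity),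
      ← sqrt_mul (by have := (h₁.add h₂).det_pos; positivity)]
    congr 2
    linear_combination (-(2 * π) ^ d * (2 * π) ^ d) * det_add_mul_det_inv_add_inv h₁ h₂
  simp only [gaussPDF]
  rw [nonsing_inv_nonsing_inv _ hM.det_pos.ne'.isUnit]
  calc _ = (√((2 * π) ^ d * P₁.det))⁻¹ * (√((2 * π) ^ d * P₂.det))⁻¹ *
        exp (-(1 / 2) * ((x - μ₁) ⬝ᵥ P₁⁻¹ *ᵥ (x - μ₁) + (x - μ₂) ⬝ᵥ P₂⁻¹ *ᵥ (x - μ₂))) := by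
        rw [mul_add, exp_add]; ring
    _ = _ := by
        rw [hconst, quadForm_inv_add_quadForm_inv h₁ h₂, mul_add, exp_add]; ring

theorem integrable_gaussPDF_mul_gaussPDF :
    Integrable (fun x => gaussPDF d μ₁ P₁ x * gaussPDF d μ₂ P₂ x) := by
  simp_rw [gaussPDF_mul_gaussPDF h₁ h₂]
  exact (integrable_gaussPDF (h₁.inv.add h₂.inv).inv _).const_mul _

theorem integral_gaussPDF_mul_gaussPDF :
    ∫ x, gaussPDF d μ₁ P₁ x * gaussPDF d μ₂ P₂ x = gaussPDF d μ₂ (P₁ + P₂) μ₁ := by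
  simp_rw [gaussPDF_mul_gaussPDF h₁ h₂]
  rw [integral_const_mul, integral_gaussPDF (h₁.inv.add h₂.inv).inv, mul_one]

end GaussPDF

noncomputable def gaussMixture (d : ℕ) {ι : Type*} (s : Finset ι) (w : ι → ℝ)
    (μ : ι → Fin d → ℝ) (P : ι → Matrix (Fin d) (Fin d) ℝ) (x : Fin d → ℝ) : ℝ :=
  ∑ i ∈ s, w i * gaussPDF d (μ i) (P i) x

section GaussMixture

variable {d : ℕ}

theorem memLp_two_gaussPDF {S : Matrix (Fin d) (Fin d) ℝ} (hS : S.PosDef) (μ : Fin d → ℝ) :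
    MemLp (gaussPDF d μ S) 2 :=
  (memLp_two_iff_integrable_sq (integrable_gaussPDF hS μ).aestronglyMeasurable).mpr <| by
    simpa only [sq] using integrable_gaussPDF_mul_gaussPDF hS hS μ μ

variable {ι : Type*} (s : Finset ι) (w : ι → ℝ) (μ : ι → Fin d → ℝ)
  {P : ι → Matrix (Fin d) (Fin d) ℝ}

theorem gaussMixture_update [DecidableEq ι] {n : ι} (hn : n ∈ s) (t : ℝ) (x : Fin d → ℝ) :
    gaussMixture d s (Function.update w n t) μ P x =
      t * gaussPDF d (μ n) (P n) x + gaussMixture d (s.erase n) w μ P x := by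
  simp only [gaussMixture]
  rw [← add_sum_erase _ _ hn, Function.update_self]
  congr 1
  exact sum_congr rfl fun i hi => by rw [Function.update_of_ne (ne_of_mem_erase hi)]

variable (hP : ∀ i, (P i).PosDef)
include hP

theorem memLp_two_gaussMixture : MemLp (gaussMixture d s w μ P) 2 := by
  have := memLp_finsetSum' s fun i _ => (memLp_two_gaussPDF (hP i) (μ i)).const_mul (w i)
  convert this using 1
  ext x
  simp [gaussMixture]

theorem integral_gaussPDF_mul_gaussMixture {P₀ : Matrix (Fin d) (Fin d) ℝ} (h₀ : P₀.PosDef)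
    (μ₀ : Fin d → ℝ) :
    ∫ x, gaussPDF d μ₀ P₀ x * gaussMixture d s w μ P x =
      ∑ i ∈ s, w i * gaussPDF d (μ i) (P₀ + P i) μ₀ := by
  simp only [gaussMixture, Finset.mul_sum, mul_left_comm (gaussPDF d μ₀ P₀ _)]
  rw [integral_finsetSum _ fun i _ =>
    (integrable_gaussPDF_mul_gaussPDF h₀ (hP i) μ₀ (μ i)).const_mul (w i)]
  simp only [integral_const_mul, integral_gaussPDF_mul_gaussPDF h₀ (hP _)]

end GaussMixture

/-- Regarding `J(αₙ) = ISD(p‖q)` as a function of the single mixture weight `αₙ`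
(all other weights fixed), `J` is differentiable everywhere with derivative
`J'(αₙ) = 2 Σ_{n'≠n} α_{n'} N(μₙ; μ_{n'}, Pₙ+P_{n'}) + 2 αₙ N(μₙ; μₙ, 2Pₙ)
 - 2 Σₘ βₘ N(μₙ; mₘ, Pₙ+Sₘ)`. -/
theorem hasDerivAt_isd_single_weight (d : ℕ) (I₁ I₂ : Type*)
    [Fintype I₁] [Fintype I₂] [DecidableEq I₁]
    (α : I₁ → ℝ) (β : I₂ → ℝ)
    (μ : I₁ → Fin d → ℝ) (m : I₂ → Fin d → ℝ)
    (P : I₁ → Matrix (Fin d) (Fin d) ℝ) (S : I₂ → Matrix (Fin d) (Fin d) ℝ)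
    (hP : ∀ n, (P n).PosDef) (hS : ∀ m', (S m').PosDef)
    (n : I₁) (a : ℝ) :
    HasDerivAt
      (fun t : ℝ =>
        ∫ x : Fin d → ℝ,
          ((∑ n', Function.update α n t n' * gaussPDF d (μ n') (P n') x)
            - ∑ m', β m' * gaussPDF d (m m') (S m') x) ^ 2)
      (2 * (∑ n' ∈ Finset.univ.erase n, α n' * gaussPDF d (μ n') (P n + P n') (μ n))
        + 2 * a * gaussPDF d (μ n) ((2 : ℝ) • P n) (μ n)
        - 2 * ∑ m', β m' * gaussPDF d (m m') (P n + S m') (μ n)) a := by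
  have hsplit : ∀ (t : ℝ) x,
      gaussMixture d univ (Function.update α n t) μ P x - gaussMixture d univ β m S x =
        t * gaussPDF d (μ n) (P n) x +
          (gaussMixture d (univ.erase n) α μ P - gaussMixture d univ β m S) x := by
    intro t x
    rw [gaussMixture_update _ _ _ (mem_univ n), Pi.sub_apply, add_sub_assoc]
  have hf := memLp_two_gaussPDF (hP n) (μ n)
  have hp := memLp_two_gaussMixture (univ.erase n) α μ hP
  have hq := memLp_two_gaussMixture univ β m hS
  have hfpq : ∫ x, gaussPDF d (μ n) (P n) x *
      (gaussMixture d (univ.erase n) α μ P - gaussMixture d univ β m S) x =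
      ∑ n' ∈ univ.erase n, α n' * gaussPDF d (μ n') (P n + P n') (μ n) -
        ∑ m', β m' * gaussPDF d (m m') (P n + S m') (μ n) := by
    rw [← integral_gaussPDF_mul_gaussMixture _ _ _ hP (hP n),
      ← integral_gaussPDF_mul_gaussMixture _ _ _ hS (hP n)]
    simp only [Pi.sub_apply, mul_sub]
    exact integral_sub (hf.integrable_mul hp) (hf.integrable_mul hq)
  change HasDerivAt (fun t => ∫ x,
    (gaussMixture d univ (Function.update α n t) μ P x - gaussMixture d univ β m S x) ^ 2) _ a
  simp only [hsplit]
  refine (hasDerivAt_integral_mul_add_sq hf (hp.sub hq) a).congr_deriv ?_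
  rw [hfpq]
  simp only [sq, integral_gaussPDF_mul_gaussPDF (hP n) (hP n), two_smul]
  ring
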